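/- arXiv:2108.03677 — 2 statements merged into one kernel-verified Lean document; each statement's English description precedes it below -/
import Mathlib

section
/- Let Λ ⊆ ℝ be a finite set with Λ ⊆ (-∞, 1]. Let M(Λ) be the set of all real numbers m for which there exist linearly independent primitive vectors v₁, v₂ ∈ ℤ², elements b₁, b₂ ∈ Λ, and the (unique) linear functional L : ℝ² → ℝ with L(v₁) = 1 − b₁ and L(v₂) = 1 − b₂, such that m = inf { L(u) : u ∈ ℤ², u = a·v₁ + b·v₂ with a > 0 and b > 0 real }. Then the set of accumulation points of M(Λ) only accumulates to zero; that is, every accumulation point of the set of accumulation points of M(Λ) equals 0. -/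
/-- The coercion of an integer vector in `ℤ × ℤ` to `ℝ × ℝ`. -/
def vecR (v : ℤ × ℤ) : ℝ × ℝ := ((v.1 : ℝ), (v.2 : ℝ))

/-- The determinant of the 2×2 integer matrix with columns `v` and `w`. -/
def det2 (v w : ℤ × ℤ) : ℤ := v.1 * w.2 - v.2 * w.1

/-- The relative interior of the cone spanned by the integer vectors `v` and `w`. -/
def relintR (v w : ℤ × ℤ) : Set (ℝ × ℝ) :=
  {x | ∃ a b : ℝ, 0 < a ∧ 0 < b ∧ x = a • vecR v + b • vecR w}

/-- The set of minimal log discrepancies of toric surface pairs with torus-invariant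
boundary coefficients in `Λ`: real numbers `m` arising as the infimum of a linear
functional `L`, with `L v₁ = 1 - b₁` and `L v₂ = 1 - b₂` for `b₁, b₂ ∈ Λ`, over the
lattice points in the relative interior of the cone spanned by linearly independent
primitive vectors `v₁, v₂ ∈ ℤ²`. -/
def toricSurfaceMlds (Λ : Set ℝ) : Set ℝ :=
  {m : ℝ | ∃ (v₁ v₂ : ℤ × ℤ) (b₁ b₂ : ℝ) (L : ℝ × ℝ →ₗ[ℝ] ℝ),
    IsCoprime v₁.1 v₁.2 ∧ IsCoprime v₂.1 v₂.2 ∧ det2 v₁ v₂ ≠ 0 ∧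
    b₁ ∈ Λ ∧ b₂ ∈ Λ ∧
    L (vecR v₁) = 1 - b₁ ∧ L (vecR v₂) = 1 - b₂ ∧
    m = sInf {r : ℝ | ∃ u : ℤ × ℤ, vecR u ∈ relintR v₁ v₂ ∧ r = L (vecR u)}}

/-!
In coordinates with respect to `v₁, v₂` the lattice `ℤ²` becomes a group `Γ` with
`ℤ² ≤ Γ ≤ (det2 v₁ v₂)⁻¹ ℤ²`, and an mld is the minimum of `(a, b) ↦ a c₁ + b c₂`,
`cᵢ = 1 - bᵢ ≥ 0`, over the points of `Γ` with `a, b > 0`. Let `p` be a minimizer and `k p ≈ (s, t)` a simultaneous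
Dirichlet approximation to precision `1 / N` with `k ≤ N³`. If both coordinates of `p` are at
least `1 / N`, minimality forces the short vector `w = k p - (s, t)` of `Γ` to lie in the kernel of
the functional: either `w = 0` and the mld is one of finitely many values `(i c₁ + j c₂) / k`, or
sliding `p` along `w` produces a minimizer with a coordinate below `1 / N`. For a minimizer `(a, b)`
comparing with `(⌊1/b⌋ + 1) (a, b) - (0, 1)` shows that the mld lies within `a c₁` of
`c₂ / ⌊1/b⌋`. So for every `ε > 0` all but finitely many mlds lie within `ε` of
`{c / k | c ∈ 1 - Λ, k ∈ ℕ}`, whose only accumulation point is `0`.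
-/

open Set Metric

lemma exists_nat_abs_mul_sub_lt_pair (x y : ℝ) {n : ℕ} (hn : 0 < n) :
    ∃ k : ℕ, 0 < k ∧ k ≤ n ^ 3 ∧ ∃ s t : ℤ, |k * x - s| < 1 / n ∧ |k * y - t| < 1 / n := by
  obtain ⟨k₁, hk₁, hk₁n, hx⟩ := Real.exists_nat_abs_mul_sub_round_le x (pow_pos hn 2)
  obtain ⟨k₂, hk₂, hk₂n, hy⟩ := Real.exists_nat_abs_mul_sub_round_le (k₁ * y) hn
  have hn' : (0 : ℝ) < n := by exact_mod_cast hn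
  refine ⟨k₂ * k₁, by positivity, by nlinarith [Nat.mul_le_mul hk₂n hk₁n],
    k₂ * round (k₁ * x), round (k₂ * (k₁ * y)), ?_, ?_⟩
  · calc |((k₂ * k₁ : ℕ) : ℝ) * x - ((k₂ * round (k₁ * x) : ℤ) : ℝ)|
          = k₂ * |k₁ * x - round (k₁ * x)| := by
            push_cast
            rw [mul_assoc, ← mul_sub, abs_mul, Nat.abs_cast]
        _ ≤ n * (1 / ((n ^ 2 : ℕ) + 1)) := by
            gcongr
        _ < 1 / n := by
            push_cast
            rw [mul_one_div, div_lt_div_iff₀ (by positivity) hn']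
            nlinarith
  · calc |((k₂ * k₁ : ℕ) : ℝ) * y - (round (k₂ * (k₁ * y)) : ℝ)|
          = |k₂ * (k₁ * y) - round (k₂ * (k₁ * y))| := by push_cast; ring_nf
        _ ≤ 1 / (n + 1) := hy
        _ < 1 / n := by gcongr; linarith

lemma exists_nat_abs_sub_div_le {α β b : ℝ} (hα : 0 ≤ α) (hβ : 0 ≤ β) (hb : 0 < b)
    (h : ∀ n : ℕ, 1 < n * b → α + b * β ≤ n * α + (n * b - 1) * β) :
    ∃ k : ℕ, |α + b * β - β / k| ≤ α := by
  set k := ⌊1 / b⌋₊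
  have hkb : k * b ≤ 1 := (le_div_iff₀ hb).1 (Nat.floor_le (one_div_pos.2 hb).le)
  have hk₁ : 1 < ((k + 1 : ℕ) : ℝ) * b := by
    push_cast
    exact (div_lt_iff₀ hb).1 (Nat.lt_floor_add_one (1 / b))
  have key : (1 - k * b) * β ≤ k * α := by
    have := h _ hk₁
    push_cast at this
    linarith
  refine ⟨k, ?_⟩
  rcases Nat.eq_zero_or_pos k with hk | hk
  · have hβ0 : β = 0 := by simp [hk] at key; linarith
    simp [hβ0, abs_of_nonneg hα]
  · have hk' : (0 : ℝ) < k := by exact_mod_cast hk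
    have hX : 0 ≤ (1 - k * b) * β / k := by
      apply div_nonneg _ hk'.le
      exact mul_nonneg (by linarith) hβ
    have hXα : (1 - k * b) * β / k ≤ α := (div_le_iff₀ hk').2 (by linarith)
    have heq : α + b * β - β / k = α - (1 - k * b) * β / k := by field_simp; ring
    rw [heq, abs_le]
    constructor <;> linarith

def coneValues (Γ : AddSubgroup (ℝ × ℝ)) (c₁ c₂ : ℝ) : Set ℝ :=
  {r | ∃ p ∈ Γ, 0 < p.1 ∧ 0 < p.2 ∧ r = p.1 * c₁ + p.2 * c₂}

structure IsConeMinimizer (Γ : AddSubgroup (ℝ × ℝ)) (c₁ c₂ : ℝ) (p : ℝ × ℝ) : Prop where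
  mem : p ∈ Γ
  fst_pos : 0 < p.1
  snd_pos : 0 < p.2
  le : ∀ p' ∈ Γ, 0 < p'.1 → 0 < p'.2 → p.1 * c₁ + p.2 * c₂ ≤ p'.1 * c₁ + p'.2 * c₂

section Cone

variable {Γ : AddSubgroup (ℝ × ℝ)} {c₁ c₂ : ℝ} {p : ℝ × ℝ}

namespace IsConeMinimizer

lemma sInf_eq (hp : IsConeMinimizer Γ c₁ c₂ p) :
    sInf (coneValues Γ c₁ c₂) = p.1 * c₁ + p.2 * c₂ :=
  IsLeast.csInf_eq ⟨⟨p, hp.mem, hp.fst_pos, hp.snd_pos, rfl⟩,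
    by rintro _ ⟨p', hp', h₁, h₂, rfl⟩; exact hp.le p' hp' h₁ h₂⟩

lemma exists_abs_sub_div_le_fst (hp : IsConeMinimizer Γ c₁ c₂ p)
    (hℤ : ∀ s t : ℤ, ((s : ℝ), (t : ℝ)) ∈ Γ) (hc₁ : 0 ≤ c₁) (hc₂ : 0 ≤ c₂) :
    ∃ k : ℕ, |sInf (coneValues Γ c₁ c₂) - c₂ / k| ≤ p.1 * c₁ := by
  rw [hp.sInf_eq]
  refine exists_nat_abs_sub_div_le (mul_nonneg hp.fst_pos.le hc₁) hc₂ hp.snd_pos fun n hn => ?_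
  have hn₀ : (0 : ℝ) < n := pos_of_mul_pos_left (one_pos.trans hn) hp.snd_pos.le
  have := hp.le (n • p - (0, 1)) (Γ.sub_mem (Γ.nsmul_mem hp.mem n) (by simpa using hℤ 0 1))
    (by simpa using mul_pos hn₀ hp.fst_pos) (by simpa using hn)
  simp only [Prod.fst_sub, Prod.snd_sub, Prod.smul_fst, Prod.smul_snd] at this
  rw [nsmul_eq_mul, nsmul_eq_mul] at this
  linarith

lemma exists_abs_sub_div_le_snd (hp : IsConeMinimizer Γ c₁ c₂ p)
    (hℤ : ∀ s t : ℤ, ((s : ℝ), (t : ℝ)) ∈ Γ) (hc₁ : 0 ≤ c₁) (hc₂ : 0 ≤ c₂) :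
    ∃ k : ℕ, |sInf (coneValues Γ c₁ c₂) - c₁ / k| ≤ p.2 * c₂ := by
  rw [hp.sInf_eq]
  obtain ⟨k, hk⟩ := exists_nat_abs_sub_div_le (mul_nonneg hp.snd_pos.le hc₂) hc₁ hp.fst_pos
    fun n hn => by
      have hn₀ : (0 : ℝ) < n := pos_of_mul_pos_left (one_pos.trans hn) hp.fst_pos.le
      have := hp.le (n • p - (1, 0)) (Γ.sub_mem (Γ.nsmul_mem hp.mem n) (by simpa using hℤ 1 0))
        (by simpa using hn) (by simpa using mul_pos hn₀ hp.snd_pos)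
      simp only [Prod.fst_sub, Prod.snd_sub, Prod.smul_fst, Prod.smul_snd] at this
      rw [nsmul_eq_mul, nsmul_eq_mul] at this
      linarith
  exact ⟨k, by rwa [add_comm (p.1 * c₁)]⟩

lemma eval_eq_zero (hp : IsConeMinimizer Γ c₁ c₂ p) {w : ℝ × ℝ} (hw : w ∈ Γ)
    (h₁ : |w.1| < p.1) (h₂ : |w.2| < p.2) : w.1 * c₁ + w.2 * c₂ = 0 := by
  obtain ⟨h₁, h₁'⟩ := abs_lt.1 h₁
  obtain ⟨h₂, h₂'⟩ := abs_lt.1 h₂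
  have hadd := hp.le (p + w) (Γ.add_mem hp.mem hw) (by simp; linarith) (by simp; linarith)
  have hsub := hp.le (p - w) (Γ.sub_mem hp.mem hw) (by simp; linarith) (by simp; linarith)
  simp only [Prod.fst_add, Prod.snd_add, Prod.fst_sub, Prod.snd_sub] at hadd hsub
  linarith

lemma exists_fst_le (hp : IsConeMinimizer Γ c₁ c₂ p) {w : ℝ × ℝ} (hw : w ∈ Γ)
    (hw₁ : 0 < w.1) (hw₂ : w.2 ≤ 0) (hℓw : w.1 * c₁ + w.2 * c₂ = 0) :
    ∃ p', IsConeMinimizer Γ c₁ c₂ p' ∧ p'.1 ≤ w.1 := by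
  obtain ⟨j, ⟨hj, hj'⟩, -⟩ := existsUnique_sub_zsmul_mem_Ioc hw₁ p.1 0
  rw [zsmul_eq_mul] at hj hj'
  rw [zero_add] at hj'
  have hj₀ : (0 : ℝ) ≤ j := by
    have : (-1 : ℤ) < j := by
      have : (0 : ℝ) < (j + 1) * w.1 := by linarith [hp.fst_pos]
      exact_mod_cast (by linarith [pos_of_mul_pos_left this hw₁.le] : (-1 : ℝ) < j)
    exact_mod_cast (by omega : (0 : ℤ) ≤ j)
  have hval : (p - j • w).1 * c₁ + (p - j • w).2 * c₂ = p.1 * c₁ + p.2 * c₂ := by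
    simp only [Prod.fst_sub, Prod.snd_sub, Prod.smul_fst, Prod.smul_snd]
    rw [zsmul_eq_mul, zsmul_eq_mul]
    linear_combination (-(j : ℝ)) * hℓw
  refine ⟨p - j • w, ⟨Γ.sub_mem hp.mem (Γ.zsmul_mem hw j), ?_, ?_, ?_⟩, ?_⟩
  · simpa [zsmul_eq_mul] using hj
  · simp only [Prod.snd_sub, Prod.smul_snd]
    rw [zsmul_eq_mul]
    nlinarith [hp.snd_pos]
  · intro p' hp' h₁ h₂
    rw [hval]
    exact hp.le p' hp' h₁ h₂
  · simpa [zsmul_eq_mul] using hj'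

lemma exists_small_or_rational (hp : IsConeMinimizer Γ c₁ c₂ p)
    (hℤ : ∀ s t : ℤ, ((s : ℝ), (t : ℝ)) ∈ Γ) (hc₁ : 0 < c₁) (hc₂ : 0 < c₂) {N : ℕ} (hN : 0 < N) :
    (∃ p', IsConeMinimizer Γ c₁ c₂ p' ∧ (p'.1 < 1 / N ∨ p'.2 < 1 / N)) ∨
      ∃ k : ℕ, 0 < k ∧ k ≤ N ^ 3 ∧ ∃ s t : ℤ, k * p.1 = s ∧ k * p.2 = t := by
  by_cases hsmall : p.1 < 1 / N ∨ p.2 < 1 / N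
  · exact .inl ⟨p, hp, hsmall⟩
  rw [not_or, not_lt, not_lt] at hsmall
  obtain ⟨k, hk, hkN, s, t, hs, ht⟩ := exists_nat_abs_mul_sub_lt_pair p.1 p.2 hN
  set w : ℝ × ℝ := k • p - ((s : ℝ), (t : ℝ))
  have hw₁ : w.1 = k * p.1 - s := by simp [w]
  have hw₂ : w.2 = k * p.2 - t := by simp [w]
  have hw : w ∈ Γ := Γ.sub_mem (Γ.nsmul_mem hp.mem k) (hℤ s t)
  have hℓw : w.1 * c₁ + w.2 * c₂ = 0 :=
    hp.eval_eq_zero hw (by rw [hw₁]; linarith [hsmall.1]) (by rw [hw₂]; linarith [hsmall.2])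
  by_cases hw0 : w = 0
  · have h := Prod.ext_iff.1 hw0
    rw [hw₁, hw₂, Prod.fst_zero, Prod.snd_zero, sub_eq_zero, sub_eq_zero] at h
    exact .inr ⟨k, hk, hkN, s, t, h⟩
  refine .inl ?_
  have hw₁0 : w.1 ≠ 0 := by
    intro h
    have : w.2 = 0 := by
      rw [h, zero_mul, zero_add] at hℓw
      exact (mul_eq_zero.1 hℓw).resolve_right hc₂.ne'
    exact hw0 (Prod.ext h this)
  rcases hw₁0.lt_or_gt with hneg | hpos
  · obtain ⟨p', hp', hle⟩ := hp.exists_fst_le (Γ.neg_mem hw) (by simpa using hneg)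
      (by simp only [Prod.snd_neg]; nlinarith) (by simp only [Prod.fst_neg, Prod.snd_neg]; linarith)
    refine ⟨p', hp', .inl ?_⟩
    simp only [Prod.fst_neg] at hle
    linarith [neg_abs_le (k * p.1 - s)]
  · obtain ⟨p', hp', hle⟩ := hp.exists_fst_le hw hpos (by nlinarith) hℓw
    exact ⟨p', hp', .inl (by linarith [le_abs_self (k * p.1 - s)])⟩

end IsConeMinimizer

lemma exists_isConeMinimizer (hℤ : ∀ s t : ℤ, ((s : ℝ), (t : ℝ)) ∈ Γ)
    (hΓ : ((Γ : Set (ℝ × ℝ)) ∩ Ioc 0 1 ×ˢ Ioc 0 1).Finite) (hc₁ : 0 ≤ c₁) (hc₂ : 0 ≤ c₂) :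
    ∃ p, IsConeMinimizer Γ c₁ c₂ p ∧ p.1 ≤ 1 ∧ p.2 ≤ 1 := by
  obtain ⟨p, ⟨hpΓ, ⟨hp₁, hp₁'⟩, hp₂, hp₂'⟩, hmin⟩ :=
    Set.exists_min_image _ (fun p : ℝ × ℝ => p.1 * c₁ + p.2 * c₂) hΓ
      ⟨(1, 1), by simpa using hℤ 1 1, by simp⟩
  refine ⟨p, ⟨hpΓ, hp₁, hp₂, fun p' hp' h₁ h₂ => ?_⟩, hp₁', hp₂'⟩
  -- translating `p'` by a point of `ℤ²` into the box does not increase the value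
  set s := ⌈p'.1⌉ - 1
  set t := ⌈p'.2⌉ - 1
  have hs : (0 : ℝ) ≤ s := by have := Int.ceil_pos.2 h₁; exact_mod_cast (by omega : (0 : ℤ) ≤ s)
  have ht : (0 : ℝ) ≤ t := by have := Int.ceil_pos.2 h₂; exact_mod_cast (by omega : (0 : ℤ) ≤ t)
  have hbox : p' - ((s : ℝ), (t : ℝ)) ∈ Ioc (0 : ℝ) 1 ×ˢ Ioc (0 : ℝ) 1 := by
    refine ⟨⟨?_, ?_⟩, ?_, ?_⟩ <;> simp only [Prod.fst_sub, Prod.snd_sub, s, t] <;> push_cast <;>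
      linarith [Int.ceil_lt_add_one p'.1, Int.le_ceil p'.1, Int.ceil_lt_add_one p'.2,
        Int.le_ceil p'.2]
  calc p.1 * c₁ + p.2 * c₂ ≤ (p' - ((s : ℝ), (t : ℝ))).1 * c₁ + (p' - ((s : ℝ), (t : ℝ))).2 * c₂ :=
        hmin _ ⟨Γ.sub_mem hp' (hℤ s t), hbox⟩
    _ ≤ p'.1 * c₁ + p'.2 * c₂ := by
        simp only [Prod.fst_sub, Prod.snd_sub]
        nlinarith [mul_nonneg hs hc₁, mul_nonneg ht hc₂]

lemma sInf_coneValues_mem_or_near (hℤ : ∀ s t : ℤ, ((s : ℝ), (t : ℝ)) ∈ Γ)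
    (hΓ : ((Γ : Set (ℝ × ℝ)) ∩ Ioc 0 1 ×ˢ Ioc 0 1).Finite) (hc₁ : 0 ≤ c₁) (hc₂ : 0 ≤ c₂)
    {N : ℕ} (hN : 0 < N) :
    (∃ i j k : ℕ, i ≤ N ^ 3 ∧ j ≤ N ^ 3 ∧ k ≤ N ^ 3 ∧
        sInf (coneValues Γ c₁ c₂) = (i * c₁ + j * c₂) / k) ∨
      ∃ k : ℕ, |sInf (coneValues Γ c₁ c₂) - c₂ / k| ≤ c₁ / N ∨
        |sInf (coneValues Γ c₁ c₂) - c₁ / k| ≤ c₂ / N := by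
  obtain ⟨p, hp, hp₁, hp₂⟩ := exists_isConeMinimizer hℤ hΓ hc₁ hc₂
  have near : ∀ p', IsConeMinimizer Γ c₁ c₂ p' → p'.1 * c₁ ≤ c₁ / N ∨ p'.2 * c₂ ≤ c₂ / N →
      ∃ k : ℕ, |sInf (coneValues Γ c₁ c₂) - c₂ / k| ≤ c₁ / N ∨
        |sInf (coneValues Γ c₁ c₂) - c₁ / k| ≤ c₂ / N := by
    rintro p' hp' (h | h)
    · obtain ⟨k, hk⟩ := hp'.exists_abs_sub_div_le_fst hℤ hc₁ hc₂
      exact ⟨k, .inl (hk.trans h)⟩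
    · obtain ⟨k, hk⟩ := hp'.exists_abs_sub_div_le_snd hℤ hc₁ hc₂
      exact ⟨k, .inr (hk.trans h)⟩
  rcases hc₁.eq_or_lt with rfl | hc₁
  · exact .inr (near p hp (.inl (by simp)))
  rcases hc₂.eq_or_lt with rfl | hc₂
  · exact .inr (near p hp (.inr (by simp)))
  rcases hp.exists_small_or_rational hℤ hc₁ hc₂ hN with ⟨p', hp', h⟩ | ⟨k, hk, hkN, s, t, hs, ht⟩
  · refine .inr (near p' hp' (h.imp (fun h => ?_) (fun h => ?_))) <;>
      rw [div_eq_mul_one_div, mul_comm] <;> gcongr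
  have hk' : (0 : ℝ) < k := by exact_mod_cast hk
  have hkN' : (k : ℝ) ≤ (N ^ 3 : ℕ) := by exact_mod_cast hkN
  lift s to ℕ using by exact_mod_cast (hs ▸ (mul_pos hk' hp.fst_pos).le : (0 : ℝ) ≤ s)
  lift t to ℕ using by exact_mod_cast (ht ▸ (mul_pos hk' hp.snd_pos).le : (0 : ℝ) ≤ t)
  push_cast at hs ht
  refine .inl ⟨s, t, k, ?_, ?_, hkN, ?_⟩
  · exact_mod_cast (show (s : ℝ) ≤ (N ^ 3 : ℕ) by nlinarith)
  · exact_mod_cast (show (t : ℝ) ≤ (N ^ 3 : ℕ) by nlinarith)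
  · rw [hp.sInf_eq, eq_div_iff hk'.ne', ← hs, ← ht]
    ring

end Cone

-- `k = 0` contributes `c / 0 = 0`.
def natQuotients (C : Set ℝ) : Set ℝ := {x | ∃ c ∈ C, ∃ k : ℕ, x = c / k}

def boundedCombinations (C : Set ℝ) (Q : ℕ) : Set ℝ :=
  {x | ∃ c₁ ∈ C, ∃ c₂ ∈ C, ∃ i j k : ℕ, i ≤ Q ∧ j ≤ Q ∧ k ≤ Q ∧ x = (i * c₁ + j * c₂) / k}

lemma boundedCombinations_finite {C : Set ℝ} (hC : C.Finite) (Q : ℕ) :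
    (boundedCombinations C Q).Finite := by
  refine (((hC.prod hC).prod ((finite_Iic Q).prod ((finite_Iic Q).prod (finite_Iic Q)))).image
    fun x : (ℝ × ℝ) × ℕ × ℕ × ℕ => (x.2.1 * x.1.1 + x.2.2.1 * x.1.2) / x.2.2.2).subset ?_
  rintro _ ⟨c₁, hc₁, c₂, hc₂, i, j, k, hi, hj, hk, rfl⟩
  exact ⟨((c₁, c₂), i, j, k), ⟨⟨hc₁, hc₂⟩, hi, hj, hk⟩, rfl⟩

lemma natQuotients_diff_ball_finite {C : Set ℝ} (hC : C.Finite) {δ : ℝ} (hδ : 0 < δ) :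
    (natQuotients C \ ball 0 δ).Finite := by
  obtain ⟨B, hB⟩ := (hC.image abs).bddAbove
  refine ((hC.prod (finite_Iic ⌈B / δ⌉₊)).image fun x : ℝ × ℕ => x.1 / x.2).subset ?_
  rintro _ ⟨⟨c, hc, k, rfl⟩, hδk⟩
  refine ⟨(c, k), ⟨hc, ?_⟩, rfl⟩
  rw [mem_ball, dist_zero_right, Real.norm_eq_abs, not_lt, abs_div, Nat.abs_cast] at hδk
  rcases Nat.eq_zero_or_pos k with rfl | hk
  · exact Nat.zero_le _
  have hk' : (0 : ℝ) < k := by exact_mod_cast hk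
  have hB' : |c| ≤ B := hB ⟨c, hc, rfl⟩
  have : (k : ℝ) ≤ B / δ := by
    rw [le_div_iff₀ hδ]
    rw [le_div_iff₀ hk'] at hδk
    linarith
  exact_mod_cast this.trans (Nat.le_ceil _)

lemma derivedSet_subset_closure_of_diff_finite {X : Type*} [TopologicalSpace X] [T1Space X]
    {A B : Set X} (h : (A \ B).Finite) : derivedSet A ⊆ closure B := by
  intro x hx
  rcases derivedSet_union (A \ B) B ▸ derivedSet_mono _ _ (subset_sdiff_union A B) hx with h' | h'
  · exact absurd h (Set.Infinite.of_accPt h')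
  · exact derivedSet_subset_closure B h'

lemma derivedSet_subset_closure_of_diff_thickening_finite {X : Type*} [MetricSpace X]
    {A B : Set X} (h : ∀ ε > 0, (A \ thickening ε B).Finite) : derivedSet A ⊆ closure B := by
  intro x hx
  rw [closure_eq_iInter_cthickening, mem_iInter₂]
  exact fun ε hε => closure_thickening_subset_cthickening ε B
    (derivedSet_subset_closure_of_diff_finite (h ε hε) hx)

lemma derivedSet_natQuotients_subset {C : Set ℝ} (hC : C.Finite) :
    derivedSet (natQuotients C) ⊆ {0} := by
  intro x hx
  by_contra hx0
  have hx0' : 0 < |x| := abs_pos.2 hx0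
  have := closure_ball_subset_closedBall <| derivedSet_subset_closure_of_diff_finite
    (natQuotients_diff_ball_finite hC (half_pos hx0')) hx
  rw [mem_closedBall, dist_zero_right, Real.norm_eq_abs] at this
  linarith

def coordLattice (v₁ v₂ : ℤ × ℤ) : AddSubgroup (ℝ × ℝ) :=
  ((Int.castAddHom ℝ).prodMap (Int.castAddHom ℝ)).range.comap
    ((LinearMap.fst ℝ ℝ ℝ).smulRight (vecR v₁) +
      (LinearMap.snd ℝ ℝ ℝ).smulRight (vecR v₂)).toAddMonoidHom

section Toric

variable {v₁ v₂ : ℤ × ℤ}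

lemma mem_coordLattice {p : ℝ × ℝ} :
    p ∈ coordLattice v₁ v₂ ↔ ∃ u : ℤ × ℤ, vecR u = p.1 • vecR v₁ + p.2 • vecR v₂ :=
  Iff.rfl

lemma intCast_mem_coordLattice (s t : ℤ) : ((s : ℝ), (t : ℝ)) ∈ coordLattice v₁ v₂ :=
  mem_coordLattice.2 ⟨s • v₁ + t • v₂, by
    ext
    · simp [vecR]
    · simp [vecR]⟩

lemma coneValues_coordLattice (L : ℝ × ℝ →ₗ[ℝ] ℝ) :
    coneValues (coordLattice v₁ v₂) (L (vecR v₁)) (L (vecR v₂)) =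
      {r | ∃ u : ℤ × ℤ, vecR u ∈ relintR v₁ v₂ ∧ r = L (vecR u)} := by
  ext r
  constructor
  · rintro ⟨p, hp, h₁, h₂, rfl⟩
    obtain ⟨u, hu⟩ := mem_coordLattice.1 hp
    exact ⟨u, ⟨p.1, p.2, h₁, h₂, hu⟩, by simp [hu]⟩
  · rintro ⟨u, ⟨a, b, ha, hb, hu⟩, rfl⟩
    exact ⟨(a, b), mem_coordLattice.2 ⟨u, hu⟩, ha, hb, by simp [hu]⟩

lemma coordLattice_inter_box_finite (hD : det2 v₁ v₂ ≠ 0) :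
    ((coordLattice v₁ v₂ : Set (ℝ × ℝ)) ∩ Ioc 0 1 ×ˢ Ioc 0 1).Finite := by
  set d := det2 v₁ v₂
  have hd : (d : ℝ) ≠ 0 := by exact_mod_cast hD
  refine (((finite_Icc (-|d|) |d|).prod (finite_Icc (-|d|) |d|)).image
    fun ij : ℤ × ℤ => ((ij.1 : ℝ) / d, (ij.2 : ℝ) / d)).subset ?_
  rintro p ⟨hp, ⟨h₁, h₁'⟩, h₂, h₂'⟩
  obtain ⟨u, hu⟩ := mem_coordLattice.1 hp
  have hu₁ : (u.1 : ℝ) = p.1 * v₁.1 + p.2 * v₂.1 := by simpa [vecR] using congrArg Prod.fst hu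
  have hu₂ : (u.2 : ℝ) = p.1 * v₁.2 + p.2 * v₂.2 := by simpa [vecR] using congrArg Prod.snd hu
  -- Cramer's rule: `d • p` is an integer vector
  have e₁ : ((u.1 * v₂.2 - u.2 * v₂.1 : ℤ) : ℝ) = d * p.1 := by
    push_cast [d, det2]
    linear_combination (v₂.2 : ℝ) * hu₁ - (v₂.1 : ℝ) * hu₂
  have e₂ : ((v₁.1 * u.2 - v₁.2 * u.1 : ℤ) : ℝ) = d * p.2 := by
    push_cast [d, det2]
    linear_combination (v₁.1 : ℝ) * hu₂ - (v₁.2 : ℝ) * hu₁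
  have bound : ∀ {i : ℤ} {x : ℝ}, (i : ℝ) = d * x → 0 < x → x ≤ 1 → i ∈ Icc (-|d|) |d| := by
    intro i x hi hx hx'
    have : |(i : ℝ)| ≤ |(d : ℝ)| := by
      rw [hi, abs_mul, abs_of_pos hx]
      exact mul_le_of_le_one_right (abs_nonneg _) hx'
    exact abs_le.1 (by exact_mod_cast this)
  exact ⟨(_, _), ⟨bound e₁ h₁ h₁', bound e₂ h₂ h₂'⟩, by
    ext
    · simp only; rw [e₁]; field_simp
    · simp only; rw [e₂]; field_simp⟩

lemma exists_coneValues_of_mem_toricSurfaceMlds {Λ : Set ℝ} {m : ℝ}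
    (hm : m ∈ toricSurfaceMlds Λ) :
    ∃ Γ : AddSubgroup (ℝ × ℝ), (∀ s t : ℤ, ((s : ℝ), (t : ℝ)) ∈ Γ) ∧
      ((Γ : Set (ℝ × ℝ)) ∩ Ioc 0 1 ×ˢ Ioc 0 1).Finite ∧
      ∃ c₁ ∈ (1 - ·) '' Λ, ∃ c₂ ∈ (1 - ·) '' Λ, m = sInf (coneValues Γ c₁ c₂) := by
  obtain ⟨v₁, v₂, b₁, b₂, L, -, -, hD, hb₁, hb₂, hL₁, hL₂, rfl⟩ := hm
  refine ⟨coordLattice v₁ v₂, intCast_mem_coordLattice, coordLattice_inter_box_finite hD,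
    _, ⟨b₁, hb₁, rfl⟩, _, ⟨b₂, hb₂, rfl⟩, ?_⟩
  beta_reduce
  rw [← hL₁, ← hL₂, coneValues_coordLattice]

end Toric

lemma toricSurfaceMlds_diff_thickening_finite {Λ : Set ℝ} (hΛfin : Λ.Finite) (hΛ : Λ ⊆ Iic 1)
    {ε : ℝ} (hε : 0 < ε) :
    (toricSurfaceMlds Λ \ thickening ε (natQuotients ((1 - ·) '' Λ))).Finite := by
  set C := (1 - ·) '' Λ
  have hC : C.Finite := hΛfin.image _
  have hC₀ : ∀ c ∈ C, 0 ≤ c := by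
    rintro _ ⟨b, hb, rfl⟩
    linarith [show b ≤ 1 from hΛ hb]
  obtain ⟨B, hB⟩ := hC.bddAbove
  set N := ⌈B / ε⌉₊ + 1
  have hN : 0 < N := Nat.succ_pos _
  have hCN : ∀ c ∈ C, c / N < ε := fun c hc => by
    have : B / ε < N := by push_cast [N]; linarith [Nat.le_ceil (B / ε)]
    rw [div_lt_iff₀ (by positivity)]
    rw [div_lt_iff₀ hε] at this
    linarith [hB hc]
  refine (boundedCombinations_finite hC (N ^ 3)).subset ?_
  rintro m ⟨hm, hmε⟩
  obtain ⟨Γ, hℤ, hΓ, c₁, hc₁, c₂, hc₂, rfl⟩ := exists_coneValues_of_mem_toricSurfaceMlds hm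
  have near : ∀ c ∈ C, ∀ c' ∈ C, ∀ k : ℕ, |sInf (coneValues Γ c₁ c₂) - c' / k| ≤ c / N → False :=
    fun c hc c' hc' k h => hmε <| mem_thickening_iff.2
      ⟨c' / k, ⟨c', hc', k, rfl⟩, by rw [Real.dist_eq]; exact h.trans_lt (hCN c hc)⟩
  rcases sInf_coneValues_mem_or_near hℤ hΓ (hC₀ _ hc₁) (hC₀ _ hc₂) hN with
    ⟨i, j, k, hi, hj, hk, h⟩ | ⟨k, h | h⟩
  · exact ⟨c₁, hc₁, c₂, hc₂, i, j, k, hi, hj, hk, h⟩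
  · exact (near c₁ hc₁ c₂ hc₂ k h).elim
  · exact (near c₂ hc₂ c₁ hc₁ k h).elim

/-- If `Λ ⊆ (-∞, 1]` is finite, then the accumulation points of the set of minimal log
discrepancies of surface toric pairs with boundary coefficients in `Λ` only accumulate
to zero: every accumulation point of the set of accumulation points is `0`. -/
theorem toric_surface_mld_acc_points_accumulate_to_zero
    (Λ : Set ℝ) (hΛfin : Λ.Finite) (hΛ : Λ ⊆ Set.Iic 1) :
    ∀ x : ℝ, AccPt x (Filter.principal
      {y : ℝ | AccPt y (Filter.principal (toricSurfaceMlds Λ))}) → x = 0 := by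
  intro x hx
  have hM : derivedSet (toricSurfaceMlds Λ) ⊆ closure (natQuotients ((1 - ·) '' Λ)) :=
    derivedSet_subset_closure_of_diff_thickening_finite fun _ hε =>
      toricSurfaceMlds_diff_thickening_finite hΛfin hΛ hε
  have hx' : x ∈ derivedSet (natQuotients ((1 - ·) '' Λ)) := by
    rw [← derivedSet_closure]
    exact derivedSet_mono _ _ hM hx
  exact derivedSet_natQuotients_subset (hΛfin.image _) hx'
end

section
/- Let (x, x') be a ℤ-basis of ℤ² (i.e. |det(x, x')| = 1), and let m and c be positive coprime integers. Set y = m·x' − c·x. Then the cone in ℝ² spanned by x' and y admits a regular decomposition w₀ = x', w₁, …, w_s, w_{s+1} = y with at most c interior vectors, i.e. s ≤ c. -/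
/-- The real cone spanned by the integer vectors `v` and `w`. -/
def coneR (v w : ℤ × ℤ) : Set (ℝ × ℝ) :=
  {x | ∃ a b : ℝ, 0 ≤ a ∧ 0 ≤ b ∧ x = a • vecR v + b • vecR w}

section
variable (𝕜 : Type*) {E : Type*} [Field 𝕜] [LinearOrder 𝕜] [IsStrictOrderedRing 𝕜]
  [AddCommGroup E] [Module 𝕜 E]

def pairCone (u w : E) : Set E := {z | ∃ a b : 𝕜, 0 ≤ a ∧ 0 ≤ b ∧ z = a • u + b • w}

variable {𝕜}

theorem pairCone_eq_union_of_smul_eq {u v w : E} {α β γ : 𝕜} (hα : 0 < α) (hβ : 0 < β)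
    (hγ : 0 < γ) (hv : γ • v = α • u + β • w) :
    pairCone 𝕜 u w = pairCone 𝕜 u v ∪ pairCone 𝕜 v w := by
  have := hα.ne'; have := hβ.ne'; have := hγ.ne'
  ext z
  constructor
  · rintro ⟨a, b, ha, hb, rfl⟩
    rcases le_total (b * α) (a * β) with h | h
    · refine Or.inl ⟨a - b * α / β, b * γ / β, ?_, by positivity, ?_⟩
      · rwa [sub_nonneg, div_le_iff₀ hβ]
      · linear_combination (norm := match_scalars <;> field_simp <;> ring) (-(b / β)) • hv
    · refine Or.inr ⟨a * γ / α, b - a * β / α, by positivity, ?_, ?_⟩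
      · rwa [sub_nonneg, div_le_iff₀ hα]
      · linear_combination (norm := match_scalars <;> field_simp <;> ring) (-(a / α)) • hv
  · rintro (⟨a, b, ha, hb, rfl⟩ | ⟨a, b, ha, hb, rfl⟩)
    · refine ⟨a + b * α / γ, b * β / γ, by positivity, by positivity, ?_⟩
      linear_combination (norm := match_scalars <;> field_simp <;> ring) (b / γ) • hv
    · refine ⟨a * α / γ, b + a * β / γ, by positivity, by positivity, ?_⟩
      linear_combination (norm := match_scalars <;> field_simp <;> ring) (a / γ) • hv

end

@[simp] theorem vecR_add (p q : ℤ × ℤ) : vecR (p + q) = vecR p + vecR q := by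
  simp [vecR]

@[simp] theorem vecR_zsmul (a : ℤ) (p : ℤ × ℤ) : vecR (a • p) = (a : ℝ) • vecR p := by
  simp [vecR]

theorem coneR_eq_pairCone (v w : ℤ × ℤ) : coneR v w = pairCone ℝ (vecR v) (vecR w) := rfl

theorem coneR_eq_union_of_zsmul_eq {u v w : ℤ × ℤ} {α β γ : ℤ} (hα : 0 < α) (hβ : 0 < β)
    (hγ : 0 < γ) (hv : γ • v = α • u + β • w) : coneR u w = coneR u v ∪ coneR v w := by
  simp only [coneR_eq_pairCone]
  apply pairCone_eq_union_of_smul_eq (Int.cast_pos.2 hα) (Int.cast_pos.2 hβ) (Int.cast_pos.2 hγ)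
  simpa only [vecR_add, vecR_zsmul] using congrArg vecR hv

theorem det2_zsmul_sub (x x' : ℤ × ℤ) (k : ℤ) : det2 x' (k • x' - x) = det2 x x' := by
  simp only [det2, Prod.fst_sub, Prod.snd_sub, Prod.smul_fst, Prod.smul_snd, smul_eq_mul]
  ring

def IsRegularDecomposition (u u' : ℤ × ℤ) {s : ℕ} (w : Fin (s + 2) → ℤ × ℤ) : Prop :=
  w 0 = u ∧ w (Fin.last (s + 1)) = u' ∧
    (∀ i : Fin (s + 1), |det2 (w i.castSucc) (w i.succ)| = 1) ∧
    ∀ z : ℝ × ℝ, z ∈ coneR u u' ↔ ∃ i : Fin (s + 1), z ∈ coneR (w i.castSucc) (w i.succ)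

namespace IsRegularDecomposition

theorem pair {u u' : ℤ × ℤ} (h : |det2 u u'| = 1) : IsRegularDecomposition u u' ![u, u'] :=
  ⟨rfl, rfl, by simpa using h, by simp⟩

theorem cons {u v u' : ℤ × ℤ} {s : ℕ} {w : Fin (s + 2) → ℤ × ℤ} (hdet : |det2 u v| = 1)
    (hsplit : coneR u u' = coneR u v ∪ coneR v u') (hw : IsRegularDecomposition v u' w) :
    IsRegularDecomposition u u' (Fin.cons u w : Fin (s + 3) → ℤ × ℤ) := by
  obtain ⟨hw0, hwlast, hwdet, hwcone⟩ := hw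
  refine ⟨rfl, hwlast, ?_, fun z => ?_⟩
  · simpa [Fin.forall_fin_succ, ← Fin.succ_castSucc, hw0, hdet] using hwdet
  · simp [hsplit, hwcone, Fin.exists_fin_succ, hw0]

end IsRegularDecomposition

theorem IsCoprime.exists_mul_eq_add {m c : ℤ} (hc : 1 < c) (hcop : IsCoprime m c) :
    ∃ k r : ℤ, 0 < r ∧ r < c ∧ c * k = m + r ∧ IsCoprime c r := by
  have hndvd : ¬c ∣ m := fun hdvd => by
    rcases Int.isUnit_iff.mp (hcop.isUnit_of_dvd' hdvd dvd_rfl) with h | h <;> omega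
  have hmod : m % c ≠ 0 := mt Int.dvd_of_emod_eq_zero hndvd
  have hdiv := Int.mul_ediv_add_emod m c
  have hlt := Int.emod_lt_of_pos m (by omega : 0 < c)
  have hnn := Int.emod_nonneg m (by omega : c ≠ 0)
  refine ⟨m / c + 1, c - m % c, by omega, by omega, by linarith, ?_⟩
  have key : c - m % c = -m + c * (m / c + 1) := by linarith
  rw [key]
  exact hcop.symm.neg_right.add_mul_left_right _

theorem exists_isRegularDecomposition_zsmul_sub {x x' : ℤ × ℤ} (hdet : |det2 x x'| = 1)
    {m c : ℤ} (hc : 0 < c) (hcop : IsCoprime m c) :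
    ∃ s : ℕ, (s : ℤ) ≤ c ∧ ∃ w : Fin (s + 2) → ℤ × ℤ,
      IsRegularDecomposition x' (m • x' - c • x) w := by
  rcases (show c = 1 ∨ 1 < c by omega) with rfl | hc1
  · exact ⟨0, by simp, _, .pair (by rwa [one_smul, det2_zsmul_sub])⟩
  obtain ⟨k, r, hr, hrc, hk, hcop'⟩ := hcop.exists_mul_eq_add hc1
  set v := k • x' - x
  have hdetv : |det2 x' v| = 1 := by rwa [det2_zsmul_sub]
  have hy : m • x' - c • x = c • v - r • x' := by
    simp only [v, smul_sub, smul_smul, hk, add_smul]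
    abel
  obtain ⟨s, hs, w, hw⟩ := exists_isRegularDecomposition_zsmul_sub hdetv hr hcop'
  refine ⟨s + 1, by push_cast; omega, Fin.cons x' w, .cons hdetv ?_ (hy ▸ hw)⟩
  rw [hy]
  exact coneR_eq_union_of_zsmul_eq hr one_pos hc (by abel)
termination_by c.toNat
decreasing_by omega

theorem regular_decomposition_of_cone_bounded_general
    (x x' : ℤ × ℤ) (hdet : |det2 x x'| = 1)
    (m c : ℤ) (hc : 0 < c) (hcop : IsCoprime m c)
    (y : ℤ × ℤ) (hy : y = m • x' - c • x) :
    ∃ s : ℕ, (s : ℤ) ≤ c ∧ ∃ w : Fin (s + 2) → ℤ × ℤ,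
      w 0 = x' ∧ w (Fin.last (s + 1)) = y ∧
      (∀ i : Fin (s + 1), |det2 (w i.castSucc) (w i.succ)| = 1) ∧
      (∀ z : ℝ × ℝ, z ∈ coneR x' y ↔
        ∃ i : Fin (s + 1), z ∈ coneR (w i.castSucc) (w i.succ)) := by
  subst hy
  exact exists_isRegularDecomposition_zsmul_sub hdet hc hcop

/-- Let `(x, x')` be a ℤ-basis of `ℤ²`, and let `m, c` be positive coprime integers. Set
`y = m • x' - c • x`. Then the cone spanned by `x'` and `y` admits a regular decomposition
`w 0 = x', w 1, …, w s, w (s+1) = y` with `s ≤ c` interior vectors. -/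
theorem regular_decomposition_of_cone_bounded
    (x x' : ℤ × ℤ) (hdet : |det2 x x'| = 1)
    (m c : ℤ) (hm : 0 < m) (hc : 0 < c) (hcop : IsCoprime m c)
    (y : ℤ × ℤ) (hy : y = m • x' - c • x) :
    ∃ s : ℕ, (s : ℤ) ≤ c ∧ ∃ w : Fin (s + 2) → ℤ × ℤ,
      w 0 = x' ∧ w (Fin.last (s + 1)) = y ∧
      (∀ i : Fin (s + 1), |det2 (w i.castSucc) (w i.succ)| = 1) ∧
      (∀ z : ℝ × ℝ, z ∈ coneR x' y ↔
        ∃ i : Fin (s + 1), z ∈ coneR (w i.castSucc) (w i.succ)) :=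
  regular_decomposition_of_cone_bounded_general x x' hdet m c hc hcop y hy
end
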